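/- Let q ∈ ℂ with 0 < |q| < 1, let y ∈ ℂ be nonzero with y ∉ {q^k : k ∈ ℤ}, and let m ∈ ℤ. Then the function u ↦ A(q, y, u^{−1}) has a simple pole at u = q^m with residue q^m y^{m} B(q, y); that is, lim_{u → q^m} (u − q^m) · A(q, y, u^{−1}) = q^m y^{m} B(q, y). -/

import Mathlib

open Complex Filter Topology

/-- The Jacobi theta function θ₁(τ, z) = i·∑_{n∈ℤ} (−1)ⁿ e^{πiτ(n−1/2)²} e^{2πiz(n−1/2)}. -/
noncomputable def theta1 (τ z : ℂ) : ℂ :=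
  Complex.I * ∑' n : ℤ, (-1 : ℂ) ^ n *
    Complex.exp (Real.pi * Complex.I * τ * ((n : ℂ) - 1/2) ^ 2) *
    Complex.exp (2 * Real.pi * Complex.I * z * ((n : ℂ) - 1/2))

/-- The lattice ℤ + τℤ ⊂ ℂ. -/
def lattice (τ : ℂ) : Set ℂ := {w : ℂ | ∃ m n : ℤ, w = (m : ℂ) + (n : ℂ) * τ}

/-- A(q,y,u) = ∏_{n≥1} (1−yuq^{n−1})(1−(yu)⁻¹qⁿ) / ((1−uq^{n−1})(1−u⁻¹qⁿ)). -/
noncomputable def A (q y u : ℂ) : ℂ :=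
  ∏' n : ℕ, ((1 - y * u * q ^ n) * (1 - (y * u)⁻¹ * q ^ (n + 1))) /
    ((1 - u * q ^ n) * (1 - u⁻¹ * q ^ (n + 1)))

/-- B(q,y) = ∏_{n≥1} (1−yq^{n−1})(1−y⁻¹qⁿ) / (1−qⁿ)². -/
noncomputable def B (q y : ℂ) : ℂ :=
  ∏' n : ℕ, ((1 - y * q ^ n) * (1 - y⁻¹ * q ^ (n + 1))) / (1 - q ^ (n + 1)) ^ 2

/-- Equivariant elliptic genus of the toric CY 3-fold with fixed-point set `V`
and weight vectors `w v j = (aʲᵥ, bʲᵥ)`. -/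
noncomputable def Z {V : Type*} [Fintype V] (w : V → Fin 3 → ℤ × ℤ)
    (τ z t₁ t₂ : ℂ) : ℂ :=
  ∑ v : V, ∏ j : Fin 3,
    theta1 τ (z + ((w v j).1 : ℂ) * t₁ + ((w v j).2 : ℂ) * t₂) /
      theta1 τ (((w v j).1 : ℂ) * t₁ + ((w v j).2 : ℂ) * t₂)

/-! Write `(c; q)_∞ = ∏ₙ (1 - c qⁿ)` and `θ(v) = (v; q)_∞ (q/v; q)_∞`. Then
`A(q, y, v) = θ(yv) / θ(v)` and `B(q, y) = θ(y) / (q; q)_∞²`, and `θ(qv) = -v⁻¹ θ(v)` gives the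
quasi-periodicity `A(q, y, qᵏ v) = y⁻ᵏ A(q, y, v)`. With `w = qᵐ u⁻¹` this turns
`(u - qᵐ) A(q, y, u⁻¹)` into `yᵐ u (1 - w) A(q, y, w)`. Since `θ(w) = (1 - w) (qw; q)_∞ (q/w; q)_∞`,
the factor `1 - w` cancels and `(1 - w) A(q, y, w) → θ(y) / (q; q)_∞² = B(q, y)` as `w → 1`, by
continuity of the locally uniformly convergent product `c ↦ (c; q)_∞`. -/

noncomputable def qPochhammer (q c : ℂ) : ℂ := ∏' n : ℕ, (1 - c * q ^ n)

noncomputable def qTheta (q v : ℂ) : ℂ := qPochhammer q v * qPochhammer q (q * v⁻¹)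

lemma tendsto_mul_inv_nhdsNE_one {𝕜 : Type*} [NormedField 𝕜] {a : 𝕜} (ha : a ≠ 0) :
    Tendsto (fun u : 𝕜 => a * u⁻¹) (𝓝[≠] a) (𝓝[≠] 1) := by
  refine tendsto_nhdsWithin_iff.mpr ⟨?_, eventually_nhdsWithin_of_forall fun u hu h => hu ?_⟩
  · simpa [ha] using ((tendsto_inv₀ ha).const_mul a).mono_left nhdsWithin_le_nhds
  · exact ((mul_inv_eq_one₀ (by rintro rfl; simp at h)).mp h).symm

section
variable {q : ℂ}

lemma summable_norm_neg_mul_pow (hq : ‖q‖ < 1) (c : ℂ) :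
    Summable fun n : ℕ => ‖-(c * q ^ n)‖ := by
  simpa [norm_mul, norm_pow] using
    (summable_geometric_of_lt_one (norm_nonneg q) hq).mul_left ‖c‖

lemma hasProd_qPochhammer (hq : ‖q‖ < 1) (c : ℂ) :
    HasProd (fun n : ℕ => 1 - c * q ^ n) (qPochhammer q c) := by
  simp_rw [sub_eq_add_neg]
  exact (multipliable_one_add_of_summable (summable_norm_neg_mul_pow hq c)).hasProd

lemma qPochhammer_ne_zero (hq : ‖q‖ < 1) {c : ℂ} (hc : ∀ n : ℕ, 1 - c * q ^ n ≠ 0) :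
    qPochhammer q c ≠ 0 := by
  simp_rw [sub_eq_add_neg] at hc
  simpa only [qPochhammer, sub_eq_add_neg] using
    tprod_one_add_ne_zero_of_summable hc (summable_norm_neg_mul_pow hq c)

lemma qPochhammer_self_ne_zero (hq : ‖q‖ < 1) : qPochhammer q q ≠ 0 := by
  refine qPochhammer_ne_zero hq fun n h => ?_
  have : ‖q * q ^ n‖ < 1 := by
    rw [← pow_succ', norm_pow]
    exact pow_lt_one₀ (norm_nonneg q) hq n.succ_ne_zero
  rw [← sub_eq_zero.mp h, norm_one] at this
  exact this.false

lemma qPochhammer_eq_one_sub_mul (hq : ‖q‖ < 1) (c : ℂ) :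
    qPochhammer q c = (1 - c) * qPochhammer q (q * c) := by
  have hshift : (fun n : ℕ => 1 - c * q ^ (n + 1)) = fun n : ℕ => 1 - q * c * q ^ n := by
    funext n; ring
  have htail : Multipliable fun n : ℕ => 1 - c * q ^ (n + 1) := by
    rw [hshift]; exact (hasProd_qPochhammer hq _).multipliable
  rw [qPochhammer, tprod_eq_zero_mul' (f := fun n => 1 - c * q ^ n) htail, pow_zero, mul_one, hshift, qPochhammer]

lemma continuous_qPochhammer (hq : ‖q‖ < 1) : Continuous (qPochhammer q) := by
  refine continuous_iff_continuousAt.mpr fun c => ?_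
  have hprod : HasProdLocallyUniformlyOn (fun n c => 1 + -(c * q ^ n))
      (fun c => ∏' n, (1 + -(c * q ^ n))) (Metric.ball 0 (‖c‖ + 1)) :=
    Summable.hasProdLocallyUniformlyOn_nat_one_add Metric.isOpen_ball
      ((summable_geometric_of_lt_one (norm_nonneg q) hq).mul_left (‖c‖ + 1))
      (.of_forall fun n x hx => by
        rw [norm_neg, norm_mul, norm_pow]
        exact mul_le_mul_of_nonneg_right (mem_ball_zero_iff.mp hx).le (by positivity))
      (fun n => by fun_prop)
  have hcont := (hasProdLocallyUniformlyOn_iff_tendstoLocallyUniformlyOn.mp hprod).continuousOn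
    (.of_forall fun s => by fun_prop)
  simp_rw [← sub_eq_add_neg] at hcont
  exact hcont.continuousAt (Metric.isOpen_ball.mem_nhds (by simp))

lemma hasProd_qTheta (hq : ‖q‖ < 1) (v : ℂ) :
    HasProd (fun n : ℕ => (1 - v * q ^ n) * (1 - v⁻¹ * q ^ (n + 1))) (qTheta q v) := by
  have hterm : ∀ n : ℕ, 1 - v⁻¹ * q ^ (n + 1) = 1 - q * v⁻¹ * q ^ n := fun n => by ring
  simp_rw [hterm]
  exact (hasProd_qPochhammer hq v).mul (hasProd_qPochhammer hq _)

lemma continuousAt_qTheta (hq : ‖q‖ < 1) {v : ℂ} (hv : v ≠ 0) : ContinuousAt (qTheta q) v :=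
  (continuous_qPochhammer hq).continuousAt.mul
    ((continuous_qPochhammer hq).continuousAt.comp
      (continuousAt_const.mul (continuousAt_inv₀ hv)))

lemma qTheta_eq_one_sub_mul (hq : ‖q‖ < 1) (v : ℂ) :
    qTheta q v = (1 - v) * (qPochhammer q (q * v) * qPochhammer q (q * v⁻¹)) := by
  rw [qTheta, qPochhammer_eq_one_sub_mul hq v, mul_assoc]

lemma qTheta_q_mul (hq : ‖q‖ < 1) (hq0 : q ≠ 0) {v : ℂ} (hv : v ≠ 0) :
    qTheta q (q * v) = -v⁻¹ * qTheta q v := by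
  have hinv : q * (q * v)⁻¹ = v⁻¹ := by field_simp
  rw [qTheta, qTheta, hinv, qPochhammer_eq_one_sub_mul hq v⁻¹, qPochhammer_eq_one_sub_mul hq v,
    show (1 : ℂ) - v⁻¹ = -v⁻¹ * (1 - v) by field_simp; ring]
  ring

lemma A_eq_qTheta_div (hq : ‖q‖ < 1) (y v : ℂ) : A q y v = qTheta q (y * v) / qTheta q v := by
  by_cases hv : qTheta q v = 0
  · -- some factor of the denominator of `A` vanishes, so with `x / 0 = 0` both sides are `0`
    rw [hv, div_zero, A]
    refine tprod_of_exists_eq_zero ?_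
    obtain ⟨n, hn⟩ : ∃ n : ℕ, 1 - v * q ^ n = 0 ∨ 1 - v⁻¹ * q ^ (n + 1) = 0 := by
      by_contra! h
      refine mul_ne_zero (qPochhammer_ne_zero hq fun n => (h n).1)
        (qPochhammer_ne_zero hq fun n => ?_) hv
      convert (h n).2 using 2
      ring
    exact ⟨n, by rcases hn with hn | hn <;> simp [hn]⟩
  · exact (((hasProd_qTheta hq (y * v)).div₀ (hasProd_qTheta hq v) hv).tprod_eq)

lemma B_eq_qTheta_div (hq : ‖q‖ < 1) (y : ℂ) : B q y = qTheta q y / qPochhammer q q ^ 2 := by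
  have hden : HasProd (fun n : ℕ => (1 - q ^ (n + 1)) ^ 2) (qPochhammer q q ^ 2) := by
    simpa only [← pow_succ'] using (hasProd_qPochhammer hq q).pow 2
  exact ((hasProd_qTheta hq y).div₀ hden (pow_ne_zero 2 (qPochhammer_self_ne_zero hq))).tprod_eq

lemma A_q_mul (hq : ‖q‖ < 1) (hq0 : q ≠ 0) {y v : ℂ} (hy : y ≠ 0) (hv : v ≠ 0) :
    A q y (q * v) = y⁻¹ * A q y v := by
  rw [A_eq_qTheta_div hq, A_eq_qTheta_div hq, mul_left_comm,
    qTheta_q_mul hq hq0 (mul_ne_zero hy hv), qTheta_q_mul hq hq0 hv,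
    show -(y * v)⁻¹ * qTheta q (y * v) = -v⁻¹ * (y⁻¹ * qTheta q (y * v)) by
      rw [mul_inv]; ring,
    mul_div_mul_left _ _ (neg_ne_zero.mpr (inv_ne_zero hv)), mul_div_assoc]

lemma A_zpow_mul (hq : ‖q‖ < 1) (hq0 : q ≠ 0) {y : ℂ} (hy : y ≠ 0) (k : ℤ) {v : ℂ}
    (hv : v ≠ 0) : A q y (q ^ k * v) = y ^ (-k) * A q y v := by
  induction k using Int.induction_on generalizing v with
  | zero => simp
  | succ i ih =>
    rw [zpow_add_one₀ hq0, mul_comm _ q, mul_assoc,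
      A_q_mul hq hq0 hy (mul_ne_zero (zpow_ne_zero _ hq0) hv), ih hv, neg_add, zpow_add₀ hy,
      zpow_neg_one]
    ring
  | pred i ih =>
    have hv' : q⁻¹ * v ≠ 0 := mul_ne_zero (inv_ne_zero hq0) hv
    have hstep : A q y v = y⁻¹ * A q y (q⁻¹ * v) := by
      rw [← A_q_mul hq hq0 hy hv', mul_inv_cancel_left₀ hq0]
    rw [zpow_sub_one₀ hq0, mul_assoc, ih hv', hstep, neg_neg, neg_sub_left, neg_neg,
      add_comm, zpow_add_one₀ hy, mul_assoc, mul_inv_cancel_left₀ hy]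

lemma tendsto_one_sub_mul_A (hq : ‖q‖ < 1) {y : ℂ} (hy : y ≠ 0) :
    Tendsto (fun w => (1 - w) * A q y w) (𝓝[≠] 1) (𝓝 (B q y)) := by
  have hcont : ContinuousAt
      (fun w => qTheta q (y * w) / (qPochhammer q (q * w) * qPochhammer q (q * w⁻¹))) 1 := by
    have hP (x : ℂ) : ContinuousAt (qPochhammer q) x := (continuous_qPochhammer hq).continuousAt
    refine ((continuousAt_qTheta hq (by simpa using hy)).comp
      (continuous_const_mul y).continuousAt).div
      (((hP _).comp (continuous_const_mul q).continuousAt).mul ((hP _).comp ?_)) ?_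
    · exact continuousAt_const.mul (continuousAt_inv₀ one_ne_zero)
    · simpa using qPochhammer_self_ne_zero hq
  have hB : B q y = qTheta q (y * 1) / (qPochhammer q (q * 1) * qPochhammer q (q * 1⁻¹)) := by
    rw [B_eq_qTheta_div hq, sq]; simp
  rw [hB]
  refine (hcont.tendsto.mono_left nhdsWithin_le_nhds).congr' ?_
  filter_upwards [self_mem_nhdsWithin] with w hw
  have hw1 : 1 - w ≠ 0 := sub_ne_zero.mpr (Ne.symm hw)
  rw [A_eq_qTheta_div hq, qTheta_eq_one_sub_mul hq w, ← mul_div_assoc, mul_div_mul_left _ _ hw1]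

end

theorem residue_A_inv_at_qm_general (q y : ℂ) (hq0 : 0 < ‖q‖) (hq1 : ‖q‖ < 1)
    (hy : y ≠ 0) (m : ℤ) :
    Filter.Tendsto (fun u : ℂ => (u - q ^ m) * A q y u⁻¹)
      (𝓝[≠] (q ^ m)) (𝓝 (q ^ m * y ^ m * B q y)) := by
  have hq : q ≠ 0 := norm_pos_iff.mp hq0
  have hqm : q ^ m ≠ 0 := zpow_ne_zero m hq
  have hlim := ((tendsto_nhdsWithin_of_tendsto_nhds tendsto_id).const_mul (y ^ m)).mul
    ((tendsto_one_sub_mul_A hq1 hy).comp (tendsto_mul_inv_nhdsNE_one hqm))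
  rw [mul_comm (q ^ m)]
  refine hlim.congr' ?_
  filter_upwards [nhdsWithin_le_nhds (isOpen_ne.mem_nhds hqm)] with u hu
  have hinv : u⁻¹ = q ^ (-m) * (q ^ m * u⁻¹) := by
    rw [← mul_assoc, ← zpow_add₀ hq, neg_add_cancel, zpow_zero, one_mul]
  rw [Function.comp_apply, id, hinv, A_zpow_mul hq1 hq hy (-m) (mul_ne_zero hqm (inv_ne_zero hu)),
    neg_neg, ← hinv]
  field_simp

/-- u ↦ A(q,y,u⁻¹) has a simple pole at u = qᵐ with residue qᵐ yᵐ B(q,y). -/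
theorem residue_A_inv_at_qm (q y : ℂ) (hq0 : 0 < ‖q‖) (hq1 : ‖q‖ < 1)
    (hy : y ≠ 0) (hy' : ∀ k : ℤ, y ≠ q ^ k) (m : ℤ) :
    Filter.Tendsto (fun u : ℂ => (u - q ^ m) * A q y u⁻¹)
      (𝓝[≠] (q ^ m)) (𝓝 (q ^ m * y ^ m * B q y)) :=
  residue_A_inv_at_qm_general q y hq0 hq1 hy m
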